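/- arXiv:1806.01987 — 2 statements merged into one kernel-verified Lean document; each statement's English description precedes it below -/
import Mathlib

section
/- The function w : ℝ² → ℝ given by w(x₁,x₂) = -|x₁|^{4/3} is a viscosity solution of -Δ_∞ w = 4³/3⁴ (= 64/81) in ℝ². -/
open MeasureTheory Metric
open scoped ENNReal RealInnerProductSpace BigOperators

noncomputable section

abbrev E2 : Type := EuclideanSpace ℝ (Fin 2)

/-- Partial derivative in the `i`-th coordinate direction. -/
def pd (i : Fin 2) (φ : E2 → ℝ) (x : E2) : ℝ :=
  fderiv ℝ φ x (EuclideanSpace.single i 1)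

/-- Second partial derivative. -/
def pd2 (i j : Fin 2) (φ : E2 → ℝ) (x : E2) : ℝ :=
  pd i (pd j φ) x

/-- The ∞-Laplacian `Δ_∞ φ = Σ_{i,j} φ_i φ_j φ_{ij}`. -/
def infLap (φ : E2 → ℝ) (x : E2) : ℝ :=
  ∑ i : Fin 2, ∑ j : Fin 2, pd i φ x * pd j φ x * pd2 i j φ x

/-- The ordinary Laplacian. -/
def lap (φ : E2 → ℝ) (x : E2) : ℝ := pd2 0 0 φ x + pd2 1 1 φ x

/-- `|Dφ|²`. -/
def gradSq (φ : E2 → ℝ) (x : E2) : ℝ := ∑ i : Fin 2, (pd i φ x) ^ 2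

/-- `|D²φ Dφ|²`. -/
def hessGradSq (φ : E2 → ℝ) (x : E2) : ℝ :=
  ∑ i : Fin 2, (∑ j : Fin 2, pd2 i j φ x * pd j φ x) ^ 2

/-- Viscosity solution of `-Δ_∞ u = f` on `Ω`. -/
def IsViscositySol (Ω : Set E2) (f u : E2 → ℝ) : Prop :=
  ∀ φ : E2 → ℝ, ContDiff ℝ 2 φ →
    (∀ x₀ ∈ Ω, IsLocalMaxOn (fun y => u y - φ y) Ω x₀ → -infLap φ x₀ ≤ f x₀) ∧
    (∀ x₀ ∈ Ω, IsLocalMinOn (fun y => u y - φ y) Ω x₀ → f x₀ ≤ -infLap φ x₀)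

/-- `G` is a weak gradient of `v` on `Ω`. -/
def HasWeakGradOn (v : E2 → ℝ) (G : E2 → E2) (Ω : Set E2) : Prop :=
  LocallyIntegrableOn v Ω volume ∧ LocallyIntegrableOn (fun x => ‖G x‖) Ω volume ∧
    ∀ φ : E2 → ℝ, ContDiff ℝ (⊤ : ℕ∞) φ → HasCompactSupport φ → tsupport φ ⊆ Ω →
      ∀ i : Fin 2, ∫ x in Ω, v x * pd i φ x = - ∫ x in Ω, G x i * φ x

/-- `G ∈ L^p_loc(Ω; ℝ²)`. -/
def MemLpLocOn (G : E2 → E2) (p : ℝ) (Ω : Set E2) : Prop :=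
  ∀ K : Set E2, K ⊆ Ω → IsCompact K → IntegrableOn (fun x => ‖G x‖ ^ p) K volume

/-- `v ∈ W^{1,p}_loc(Ω)`: there is a weak gradient of `v` lying in `L^p_loc(Ω;ℝ²)`. -/
def MemW1pLoc (v : E2 → ℝ) (p : ℝ) (Ω : Set E2) : Prop :=
  ∃ G : E2 → E2, HasWeakGradOn v G Ω ∧ MemLpLocOn G p Ω

/-- Divergence of a vector field. -/
def divg (Φ : E2 → E2) (x : E2) : ℝ := ∑ i : Fin 2, pd i (fun y => Φ y i) x

/-- The admissible pairings defining the BV norm of `f` on `U`. -/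
def bvPairings (f : E2 → ℝ) (U : Set E2) : Set ℝ :=
  { r | ∃ Φ : E2 → E2, ContDiff ℝ 1 Φ ∧ HasCompactSupport Φ ∧ tsupport Φ ⊆ U ∧
      (∀ x, ‖Φ x‖ ≤ 1) ∧ r = ∫ x in U, f x * divg Φ x }

/-- `‖f‖_{BV(U)}`. -/
def bvNorm (f : E2 → ℝ) (U : Set E2) : ℝ := sSup (bvPairings f U)

/-- `f ∈ BV_loc(Ω)`. -/
def BVloc (f : E2 → ℝ) (Ω : Set E2) : Prop :=
  ∀ U : Set E2, IsOpen U → IsCompact (closure U) → closure U ⊆ Ω →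
    BddAbove (bvPairings f U)

/-- `sup_s |h|`. -/
def supAbsOn (h : E2 → ℝ) (s : Set E2) : ℝ := sSup ((fun y => |h y|) '' s)

namespace Statement6Aux

open Filter Topology Set

/-! ### A second-order Taylor estimate -/

lemma taylor2 {g g' : ℝ → ℝ} {b : ℝ}
    (hev : ∀ᶠ t in 𝓝 (0:ℝ), HasDerivAt g (g' t) t)
    (hb : HasDerivAt g' b 0) {ε : ℝ} (hε : 0 < ε) :
    ∀ᶠ t in 𝓝 (0:ℝ), |g t - g 0 - g' 0 * t - b / 2 * t ^ 2| ≤ ε * t ^ 2 := by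
  have h1 : ∀ᶠ s in 𝓝 (0:ℝ), |g' s - g' 0 - b * s| ≤ ε * |s| := by
    have := (hasDerivAt_iff_isLittleO.mp hb).def hε
    filter_upwards [this] with s hs
    simpa [Real.norm_eq_abs, mul_comm] using hs
  rw [Metric.eventually_nhds_iff] at hev h1 ⊢
  obtain ⟨δ₁, hδ₁, H1⟩ := hev
  obtain ⟨δ₂, hδ₂, H2⟩ := h1
  refine ⟨min δ₁ δ₂, lt_min hδ₁ hδ₂, fun t ht => ?_⟩
  set G : ℝ → ℝ := fun s => g s - g 0 - g' 0 * s - b / 2 * s ^ 2 with hG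
  set G' : ℝ → ℝ := fun s => g' s - g' 0 - b * s with hG'
  have hd : dist t 0 = |t| := by simp [Real.dist_eq]
  rw [hd] at ht
  have hder : ∀ s : ℝ, |s| ≤ |t| → HasDerivAt G (G' s) s := by
    intro s hs
    have h0 : dist s 0 < min δ₁ δ₂ := by
      simpa [Real.dist_eq] using lt_of_le_of_lt hs ht
    have hgs : HasDerivAt g (g' s) s := H1 (lt_of_lt_of_le h0 (min_le_left _ _))
    have hpoly : HasDerivAt (fun s : ℝ => g 0 + g' 0 * s + b / 2 * s ^ 2)
        (g' 0 + b * s) s := by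
      have h2 : HasDerivAt (fun s : ℝ => s ^ 2) (2 * s) s := by
        simpa using hasDerivAt_pow 2 s
      have := ((hasDerivAt_id s).const_mul (g' 0)).const_add (g 0)
      have := this.add (h2.const_mul (b / 2))
      refine this.congr_deriv ?_
      ring
    have := hgs.sub hpoly
    refine (this.congr_deriv ?_).congr_of_eventuallyEq (Filter.Eventually.of_forall fun u => ?_)
    · simp [hG']; ring
    · simp [hG]; ring
  have hbound : ∀ s : ℝ, |s| ≤ |t| → |G' s| ≤ ε * |t| := by
    intro s hs
    have h0 : dist s 0 < δ₂ := by
      simpa [Real.dist_eq] using lt_of_lt_of_le (lt_of_le_of_lt hs ht) (min_le_right _ _)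
    exact le_trans (H2 h0) (by nlinarith [abs_nonneg s, abs_nonneg t])
  have hG0 : G 0 = 0 := by simp [hG]
  have key : |G t| ≤ ε * |t| * |t| := by
    rcases le_or_gt 0 t with h | h
    · have := norm_image_sub_le_of_norm_deriv_le_segment'
        (f := G) (f' := G') (a := 0) (b := t) (C := ε * |t|)
        (fun x hx => (hder x (by rw [abs_of_nonneg hx.1, abs_of_nonneg h]; exact hx.2)).hasDerivWithinAt)
        (fun x hx => hbound x (by rw [abs_of_nonneg hx.1, abs_of_nonneg h]; exact hx.2.le))
        t (right_mem_Icc.2 h)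
      rw [hG0] at this
      simpa [Real.norm_eq_abs, abs_of_nonneg h] using this
    · have := norm_image_sub_le_of_norm_deriv_le_segment'
        (f := G) (f' := G') (a := t) (b := 0) (C := ε * |t|)
        (fun x hx => (hder x (by rw [abs_of_nonpos hx.2, abs_of_nonpos h.le]; linarith [hx.1])).hasDerivWithinAt)
        (fun x hx => hbound x (by rw [abs_of_nonpos (le_of_lt hx.2), abs_of_nonpos h.le]; linarith [hx.1]))
        0 (right_mem_Icc.2 h.le)
      rw [hG0] at this
      have : |G t| ≤ ε * |t| * (0 - t) := by
        simpa [Real.norm_eq_abs, abs_sub_comm] using this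
      calc |G t| ≤ ε * |t| * (0 - t) := this
        _ = ε * |t| * |t| := by rw [abs_of_nonpos h.le]; ring
  calc |G t| ≤ ε * |t| * |t| := key
    _ = ε * t ^ 2 := by rw [mul_assoc, ← abs_mul, abs_mul_self]; ring

/-! ### The one-dimensional profile `f1 t = -|t|^{4/3}` and its derivatives -/

noncomputable def f1 : ℝ → ℝ := fun t => -((t ^ 2) ^ ((2:ℝ)/3))
noncomputable def D1 : ℝ → ℝ := fun t => -(4/3 * (t * (t ^ 2) ^ (-(1:ℝ)/3)))
noncomputable def D2 : ℝ → ℝ := fun t => -(4/9 * (t ^ 2) ^ (-(1:ℝ)/3))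

lemma hasDerivAt_f1 {t : ℝ} (ht : t ≠ 0) : HasDerivAt f1 (D1 t) t := by
  have h1 : HasDerivAt (fun s : ℝ => s ^ 2) (2 * t) t := by simpa using hasDerivAt_pow 2 t
  have h2 := (Real.hasDerivAt_rpow_const (x := t ^ 2) (p := (2:ℝ)/3)
    (Or.inl (by positivity))).comp t h1
  have h3 := h2.neg
  refine h3.congr_deriv ?_
  have he : ((2:ℝ)/3 - 1) = -(1:ℝ)/3 := by norm_num
  rw [D1, ← he]
  ring

lemma hasDerivAt_D1 {t : ℝ} (ht : t ≠ 0) : HasDerivAt D1 (D2 t) t := by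
  have hu : (0:ℝ) < t ^ 2 := by positivity
  have h1 : HasDerivAt (fun s : ℝ => s ^ 2) (2 * t) t := by simpa using hasDerivAt_pow 2 t
  have h2 := (Real.hasDerivAt_rpow_const (x := t ^ 2) (p := -(1:ℝ)/3)
    (Or.inl (by positivity))).comp t h1
  have h3 := ((hasDerivAt_id t).mul h2).const_mul (-(4:ℝ)/3)
  refine (h3.congr_deriv ?_).congr_of_eventuallyEq (Filter.Eventually.of_forall fun s => ?_)
  · have key : t ^ 2 * (t ^ 2) ^ (-(1:ℝ)/3 - 1) = (t ^ 2) ^ (-(1:ℝ)/3) := by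
      nth_rewrite 1 [← Real.rpow_one (t ^ 2)]
      rw [← Real.rpow_add hu]
      norm_num
    simp only [Function.comp, id_eq, D2]
    linear_combination ((8:ℝ)/9) * key
  · simp [D1]; ring

lemma f1_eq_abs (a : ℝ) : f1 a = -(|a| ^ ((4:ℝ)/3)) := by
  rw [f1, ← sq_abs, ← Real.rpow_natCast |a| 2, ← Real.rpow_mul (abs_nonneg a)]
  norm_num

lemma hasDerivAt_f1_zero : HasDerivAt f1 0 0 := by
  rw [hasDerivAt_iff_isLittleO, Asymptotics.isLittleO_iff]
  intro c hc
  rw [Metric.eventually_nhds_iff]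
  refine ⟨min 1 (c ^ 3), lt_min one_pos (by positivity), fun t ht => ?_⟩
  have hd : |t| < min 1 (c ^ 3) := by simpa [Real.dist_eq] using ht
  have h2 : |t| < c ^ 3 := lt_of_lt_of_le hd (min_le_right _ _)
  have h0 : f1 0 = 0 := by
    simp [f1, Real.zero_rpow (by norm_num : ((2:ℝ)/3) ≠ 0)]
  have habs : |f1 t| = |t| ^ ((4:ℝ)/3) := by
    rw [f1_eq_abs, abs_neg, abs_of_nonneg (Real.rpow_nonneg (abs_nonneg t) _)]
  rw [h0, sub_zero, smul_zero, sub_zero, sub_zero, Real.norm_eq_abs, Real.norm_eq_abs, habs]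
  rcases eq_or_ne t 0 with rfl | htne
  · simp
  · have hpos : 0 < |t| := abs_pos.mpr htne
    have e1 : |t| ^ ((4:ℝ)/3) = |t| ^ ((1:ℝ)/3) * |t| := by
      rw [show ((4:ℝ)/3) = 1/3 + 1 by norm_num, Real.rpow_add hpos, Real.rpow_one]
    have e2 : |t| ^ ((1:ℝ)/3) ≤ c := by
      have h3 := Real.rpow_le_rpow (abs_nonneg t) h2.le (by norm_num : (0:ℝ) ≤ 1/3)
      have h4 : ((c ^ 3 : ℝ)) ^ ((1:ℝ)/3) = c := by
        rw [← Real.rpow_natCast c 3, ← Real.rpow_mul hc.le]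
        norm_num
      rwa [h4] at h3
    rw [e1]
    exact mul_le_mul_of_nonneg_right e2 hpos.le

lemma D1_sq_mul_D2 {t : ℝ} (ht : t ≠ 0) : (D1 t) ^ 2 * D2 t = -(64/81) := by
  have hu : (0:ℝ) < t ^ 2 := by positivity
  have k1 : (t ^ 2) ^ (-(1:ℝ)/3) * (t ^ 2) ^ (-(1:ℝ)/3) * (t ^ 2) ^ (-(1:ℝ)/3) * (t ^ 2) ^ (1:ℝ) = 1 := by
    rw [← Real.rpow_add hu, ← Real.rpow_add hu, ← Real.rpow_add hu]
    norm_num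
  rw [Real.rpow_one] at k1
  simp only [D1, D2]
  linear_combination (-(64:ℝ)/81) * k1

/-! ### Lines in `E2` and derivatives along them -/

lemma line_hasDerivAt (x₀ : E2) (i : Fin 2) (t : ℝ) :
    HasDerivAt (fun s : ℝ => x₀ + s • (EuclideanSpace.single i (1:ℝ) : E2))
      (EuclideanSpace.single i 1) t := by
  simpa using ((hasDerivAt_id t).smul_const (EuclideanSpace.single i (1:ℝ) : E2)).const_add x₀

lemma comp_line_hasDerivAt {φ : E2 → ℝ} (hφ : ContDiff ℝ 2 φ) (x₀ : E2) (i : Fin 2) (t : ℝ) :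
    HasDerivAt (fun s : ℝ => φ (x₀ + s • (EuclideanSpace.single i (1:ℝ) : E2)))
      (pd i φ (x₀ + t • (EuclideanSpace.single i (1:ℝ) : E2))) t :=
  ((hφ.differentiable (by norm_num)).differentiableAt.hasFDerivAt).comp_hasDerivAt t
    (line_hasDerivAt x₀ i t)

lemma contDiff_pd {φ : E2 → ℝ} (hφ : ContDiff ℝ 2 φ) (i : Fin 2) : ContDiff ℝ 1 (pd i φ) :=
  (hφ.fderiv_right (by norm_num)).clm_apply contDiff_const

lemma pd_comp_line_hasDerivAt {φ : E2 → ℝ} (hφ : ContDiff ℝ 2 φ) (x₀ : E2) :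
    HasDerivAt (fun t : ℝ => pd 0 φ (x₀ + t • (EuclideanSpace.single 0 (1:ℝ) : E2)))
      (pd2 0 0 φ x₀) 0 := by
  have hdiff : DifferentiableAt ℝ (pd 0 φ) (x₀ + (0:ℝ) • (EuclideanSpace.single 0 (1:ℝ) : E2)) :=
    ((contDiff_pd hφ 0).differentiable (by norm_num)).differentiableAt
  have h := (hdiff.hasFDerivAt).comp_hasDerivAt 0 (line_hasDerivAt x₀ 0 0)
  have hx : x₀ + (0:ℝ) • (EuclideanSpace.single 0 (1:ℝ) : E2) = x₀ := by
    rw [zero_smul, add_zero]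
  rw [hx] at h
  exact h

lemma line0_apply (x₀ : E2) (t : ℝ) :
    (x₀ + t • (EuclideanSpace.single 0 (1:ℝ) : E2)) 0 = x₀ 0 + t := by
  simp [EuclideanSpace.single_apply]

lemma line1_apply (x₀ : E2) (t : ℝ) :
    (x₀ + t • (EuclideanSpace.single 1 (1:ℝ) : E2)) 0 = x₀ 0 := by
  simp [EuclideanSpace.single_apply]

lemma line_zero (x₀ : E2) (i : Fin 2) :
    x₀ + (0:ℝ) • (EuclideanSpace.single i (1:ℝ) : E2) = x₀ := by
  rw [zero_smul, add_zero]

lemma tendsto_line (x₀ : E2) (i : Fin 2) :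
    Filter.Tendsto (fun t : ℝ => x₀ + t • (EuclideanSpace.single i (1:ℝ) : E2))
      (𝓝 0) (𝓝 x₀) := by
  have hc : Continuous (fun t : ℝ => x₀ + t • (EuclideanSpace.single i (1:ℝ) : E2)) :=
    continuous_const.add (continuous_id.smul continuous_const)
  have := hc.tendsto 0
  rwa [line_zero] at this


/-! ### The four key local lemmas -/

lemma pd1_zero_max {φ : E2 → ℝ} (hφ : ContDiff ℝ 2 φ) (x₀ : E2)
    (hm : ∀ᶠ y in 𝓝 x₀, f1 (y 0) - φ y ≤ f1 (x₀ 0) - φ x₀) : pd 1 φ x₀ = 0 := by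
  have hline := (tendsto_line x₀ 1).eventually hm
  have hmax : IsLocalMax (fun s : ℝ => f1 (x₀ 0) -
      φ (x₀ + s • (EuclideanSpace.single 1 (1:ℝ) : E2))) 0 := by
    filter_upwards [hline] with s hs
    rw [line1_apply] at hs
    simp only [line_zero]
    exact hs
  have hd : HasDerivAt (fun s : ℝ => f1 (x₀ 0) -
      φ (x₀ + s • (EuclideanSpace.single 1 (1:ℝ) : E2))) (0 - pd 1 φ x₀) 0 := by
    have h1 := comp_line_hasDerivAt hφ x₀ 1 0
    rw [line_zero] at h1
    exact (hasDerivAt_const 0 _).sub h1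
  have := hmax.hasDerivAt_eq_zero hd
  linarith

lemma pd1_zero_min {φ : E2 → ℝ} (hφ : ContDiff ℝ 2 φ) (x₀ : E2)
    (hm : ∀ᶠ y in 𝓝 x₀, f1 (x₀ 0) - φ x₀ ≤ f1 (y 0) - φ y) : pd 1 φ x₀ = 0 := by
  have hline := (tendsto_line x₀ 1).eventually hm
  have hmin : IsLocalMin (fun s : ℝ => f1 (x₀ 0) -
      φ (x₀ + s • (EuclideanSpace.single 1 (1:ℝ) : E2))) 0 := by
    filter_upwards [hline] with s hs
    rw [line1_apply] at hs
    simp only [line_zero]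
    exact hs
  have hd : HasDerivAt (fun s : ℝ => f1 (x₀ 0) -
      φ (x₀ + s • (EuclideanSpace.single 1 (1:ℝ) : E2))) (0 - pd 1 φ x₀) 0 := by
    have h1 := comp_line_hasDerivAt hφ x₀ 1 0
    rw [line_zero] at h1
    exact (hasDerivAt_const 0 _).sub h1
  have := hmin.hasDerivAt_eq_zero hd
  linarith

lemma max_ne {φ : E2 → ℝ} (hφ : ContDiff ℝ 2 φ) (x₀ : E2) (ht : x₀ 0 ≠ 0)
    (hm : ∀ᶠ y in 𝓝 x₀, f1 (y 0) - φ y ≤ f1 (x₀ 0) - φ x₀) :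
    pd 0 φ x₀ = D1 (x₀ 0) ∧ D2 (x₀ 0) ≤ pd2 0 0 φ x₀ := by
  set t₀ : ℝ := x₀ 0 with ht₀
  set g : ℝ → ℝ := fun t => f1 (t₀ + t) -
    φ (x₀ + t • (EuclideanSpace.single 0 (1:ℝ) : E2)) with hg
  set g' : ℝ → ℝ := fun t => D1 (t₀ + t) -
    pd 0 φ (x₀ + t • (EuclideanSpace.single 0 (1:ℝ) : E2)) with hg'
  have hline := (tendsto_line x₀ 0).eventually hm
  have hmax : IsLocalMax g 0 := by
    filter_upwards [hline] with t hs
    rw [line0_apply] at hs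
    simp only [hg, line_zero, add_zero]
    exact hs
  have hevne : ∀ᶠ t in 𝓝 (0:ℝ), t₀ + t ≠ 0 := by
    have htend : Filter.Tendsto (fun t : ℝ => t₀ + t) (𝓝 0) (𝓝 t₀) := by
      simpa using (continuous_add_left t₀).tendsto (0:ℝ)
    exact htend.eventually (eventually_ne_nhds ht)
  have hevd : ∀ᶠ t in 𝓝 (0:ℝ), HasDerivAt g (g' t) t := by
    filter_upwards [hevne] with t htne
    have h1 : HasDerivAt (fun t : ℝ => f1 (t₀ + t)) (D1 (t₀ + t)) t := by
      have := (hasDerivAt_f1 htne).comp t ((hasDerivAt_id t).const_add t₀)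
      simpa [Function.comp_def] using this
    exact h1.sub (comp_line_hasDerivAt hφ x₀ 0 t)
  have hd0 : HasDerivAt g (g' 0) 0 := hevd.self_of_nhds
  have hg'0 : g' 0 = D1 t₀ - pd 0 φ x₀ := by simp [hg', line_zero]
  have hp0 : pd 0 φ x₀ = D1 t₀ := by
    have := hmax.hasDerivAt_eq_zero hd0
    rw [hg'0] at this
    linarith
  refine ⟨hp0, ?_⟩
  have hb : HasDerivAt g' (D2 t₀ - pd2 0 0 φ x₀) 0 := by
    have h1 : HasDerivAt (fun t : ℝ => D1 (t₀ + t)) (D2 t₀) 0 := by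
      have h0 : HasDerivAt D1 (D2 t₀) (t₀ + id (0:ℝ)) := by simpa using hasDerivAt_D1 ht
      have := h0.comp (0:ℝ) ((hasDerivAt_id (0:ℝ)).const_add t₀)
      simpa [Function.comp_def] using this
    exact h1.sub (pd_comp_line_hasDerivAt hφ x₀)
  have hzero : g' 0 = 0 := by rw [hg'0, hp0, sub_self]
  have hmax' : ∀ᶠ t in 𝓝 (0:ℝ), g t ≤ g 0 := hmax
  clear_value t₀ g g'
  have half : ∀ ε : ℝ, 0 < ε → (D2 t₀ - pd2 0 0 φ x₀) / 2 ≤ 0 + ε := by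
    intro ε hε
    have hT := taylor2 hevd hb hε
    have hcomb := ((hmax'.and hT).filter_mono
      (nhdsWithin_le_nhds (s := Set.Ioi (0:ℝ)))).and self_mem_nhdsWithin
    obtain ⟨t, ⟨hle, hTt⟩, htpos⟩ := hcomb.exists
    have htpos' : (0:ℝ) < t := htpos
    rw [hzero] at hTt
    have hX := (abs_le.mp hTt).1
    have hstep : (D2 t₀ - pd2 0 0 φ x₀) / 2 * t ^ 2 ≤ ε * t ^ 2 := by linarith
    have := le_of_mul_le_mul_right hstep (by positivity : (0:ℝ) < t ^ 2)
    linarith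
  have := le_of_forall_pos_le_add half
  linarith

lemma min_ne {φ : E2 → ℝ} (hφ : ContDiff ℝ 2 φ) (x₀ : E2) (ht : x₀ 0 ≠ 0)
    (hm : ∀ᶠ y in 𝓝 x₀, f1 (x₀ 0) - φ x₀ ≤ f1 (y 0) - φ y) :
    pd 0 φ x₀ = D1 (x₀ 0) ∧ pd2 0 0 φ x₀ ≤ D2 (x₀ 0) := by
  set t₀ : ℝ := x₀ 0 with ht₀
  set g : ℝ → ℝ := fun t => f1 (t₀ + t) -
    φ (x₀ + t • (EuclideanSpace.single 0 (1:ℝ) : E2)) with hg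
  set g' : ℝ → ℝ := fun t => D1 (t₀ + t) -
    pd 0 φ (x₀ + t • (EuclideanSpace.single 0 (1:ℝ) : E2)) with hg'
  have hline := (tendsto_line x₀ 0).eventually hm
  have hmin : IsLocalMin g 0 := by
    filter_upwards [hline] with t hs
    rw [line0_apply] at hs
    simp only [hg, line_zero, add_zero]
    exact hs
  have hevne : ∀ᶠ t in 𝓝 (0:ℝ), t₀ + t ≠ 0 := by
    have htend : Filter.Tendsto (fun t : ℝ => t₀ + t) (𝓝 0) (𝓝 t₀) := by
      simpa using (continuous_add_left t₀).tendsto (0:ℝ)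
    exact htend.eventually (eventually_ne_nhds ht)
  have hevd : ∀ᶠ t in 𝓝 (0:ℝ), HasDerivAt g (g' t) t := by
    filter_upwards [hevne] with t htne
    have h1 : HasDerivAt (fun t : ℝ => f1 (t₀ + t)) (D1 (t₀ + t)) t := by
      have := (hasDerivAt_f1 htne).comp t ((hasDerivAt_id t).const_add t₀)
      simpa [Function.comp_def] using this
    exact h1.sub (comp_line_hasDerivAt hφ x₀ 0 t)
  have hd0 : HasDerivAt g (g' 0) 0 := hevd.self_of_nhds
  have hg'0 : g' 0 = D1 t₀ - pd 0 φ x₀ := by simp [hg', line_zero]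
  have hp0 : pd 0 φ x₀ = D1 t₀ := by
    have := hmin.hasDerivAt_eq_zero hd0
    rw [hg'0] at this
    linarith
  refine ⟨hp0, ?_⟩
  have hb : HasDerivAt g' (D2 t₀ - pd2 0 0 φ x₀) 0 := by
    have h1 : HasDerivAt (fun t : ℝ => D1 (t₀ + t)) (D2 t₀) 0 := by
      have h0 : HasDerivAt D1 (D2 t₀) (t₀ + id (0:ℝ)) := by simpa using hasDerivAt_D1 ht
      have := h0.comp (0:ℝ) ((hasDerivAt_id (0:ℝ)).const_add t₀)
      simpa [Function.comp_def] using this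
    exact h1.sub (pd_comp_line_hasDerivAt hφ x₀)
  have hzero : g' 0 = 0 := by rw [hg'0, hp0, sub_self]
  have hmin' : ∀ᶠ t in 𝓝 (0:ℝ), g 0 ≤ g t := hmin
  clear_value t₀ g g'
  have half : ∀ ε : ℝ, 0 < ε → (pd2 0 0 φ x₀ - D2 t₀) / 2 ≤ 0 + ε := by
    intro ε hε
    have hT := taylor2 hevd hb hε
    have hcomb := ((hmin'.and hT).filter_mono
      (nhdsWithin_le_nhds (s := Set.Ioi (0:ℝ)))).and self_mem_nhdsWithin
    obtain ⟨t, ⟨hle, hTt⟩, htpos⟩ := hcomb.exists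
    have htpos' : (0:ℝ) < t := htpos
    rw [hzero] at hTt
    have hX := (abs_le.mp hTt).2
    have hstep : (pd2 0 0 φ x₀ - D2 t₀) / 2 * t ^ 2 ≤ ε * t ^ 2 := by linarith
    have := le_of_mul_le_mul_right hstep (by positivity : (0:ℝ) < t ^ 2)
    linarith
  have := le_of_forall_pos_le_add half
  linarith

lemma max_zero {φ : E2 → ℝ} (hφ : ContDiff ℝ 2 φ) (x₀ : E2) (ht : x₀ 0 = 0)
    (hm : ∀ᶠ y in 𝓝 x₀, f1 (y 0) - φ y ≤ f1 (x₀ 0) - φ x₀) : pd 0 φ x₀ = 0 := by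
  set g : ℝ → ℝ := fun t => f1 t -
    φ (x₀ + t • (EuclideanSpace.single 0 (1:ℝ) : E2)) with hg
  have hline := (tendsto_line x₀ 0).eventually hm
  have hmax : IsLocalMax g 0 := by
    filter_upwards [hline] with t hs
    rw [line0_apply, ht, zero_add] at hs
    simp only [hg, line_zero, ht]
    exact hs
  have hd : HasDerivAt g (0 - pd 0 φ x₀) 0 := by
    have h1 := comp_line_hasDerivAt hφ x₀ 0 0
    rw [line_zero] at h1
    exact hasDerivAt_f1_zero.sub h1
  have := hmax.hasDerivAt_eq_zero hd
  linarith

lemma min_zero {φ : E2 → ℝ} (hφ : ContDiff ℝ 2 φ) (x₀ : E2) (ht : x₀ 0 = 0)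
    (hm : ∀ᶠ y in 𝓝 x₀, f1 (x₀ 0) - φ x₀ ≤ f1 (y 0) - φ y) : False := by
  set ψ : ℝ → ℝ := fun t => φ (x₀ + t • (EuclideanSpace.single 0 (1:ℝ) : E2)) with hψdef
  set A : ℝ → ℝ := fun t => pd 0 φ (x₀ + t • (EuclideanSpace.single 0 (1:ℝ) : E2)) with hAdef
  have hline := (tendsto_line x₀ 0).eventually hm
  have hmin : IsLocalMin (fun t => f1 t - ψ t) 0 := by
    filter_upwards [hline] with t hs
    rw [line0_apply, ht, zero_add] at hs
    simp only [hψdef, line_zero, ht]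
    exact hs
  have hd : HasDerivAt (fun t => f1 t - ψ t) (0 - pd 0 φ x₀) 0 := by
    have h1 := comp_line_hasDerivAt hφ x₀ 0 0
    rw [line_zero] at h1
    exact hasDerivAt_f1_zero.sub h1
  have hp0 : pd 0 φ x₀ = 0 := by
    have := hmin.hasDerivAt_eq_zero hd
    linarith
  -- Taylor expansion of ψ at 0
  have hevd : ∀ᶠ t in 𝓝 (0:ℝ), HasDerivAt ψ (A t) t :=
    Filter.Eventually.of_forall fun t => comp_line_hasDerivAt hφ x₀ 0 t
  have hA : HasDerivAt A (pd2 0 0 φ x₀) 0 := pd_comp_line_hasDerivAt hφ x₀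
  have hA0 : A 0 = 0 := by
    rw [hAdef]
    simp only [line_zero]
    exact hp0
  have hT := taylor2 hevd hA (one_pos (α := ℝ))
  set q : ℝ := pd2 0 0 φ x₀ with hq
  set C : ℝ := 1 - q / 2 with hC
  have hmin' : ∀ᶠ t in 𝓝 (0:ℝ), f1 0 - ψ 0 ≤ f1 t - ψ t := hmin
  clear_value ψ A q C
  have hev1 : ∀ᶠ t in 𝓝[>] (0:ℝ), 1 ≤ C * t ^ ((2:ℝ)/3) := by
    have hcomb := ((hmin'.and hT).filter_mono
      (nhdsWithin_le_nhds (s := Set.Ioi (0:ℝ)))).and self_mem_nhdsWithin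
    filter_upwards [hcomb] with t htt
    obtain ⟨⟨hle, hTt⟩, htpos⟩ := htt
    have htpos' : (0:ℝ) < t := htpos
    rw [hA0] at hTt
    have hX := (abs_le.mp hTt).1
    -- g 0 = -ψ 0 since f1 0 = 0
    have hf10 : f1 0 = 0 := by
      simp [f1, Real.zero_rpow (by norm_num : ((2:ℝ)/3) ≠ 0)]
    have hineq : ψ t - ψ 0 ≤ f1 t := by
      rw [hf10] at hle
      linarith
    have hf1t : f1 t = -(t ^ ((4:ℝ)/3)) := by
      rw [f1_eq_abs, abs_of_pos htpos']
    have h43 : (0:ℝ) < t ^ ((4:ℝ)/3) := Real.rpow_pos_of_pos htpos' _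
    have e : t ^ (2:ℕ) = t ^ ((4:ℝ)/3) * t ^ ((2:ℝ)/3) := by
      rw [← Real.rpow_add htpos', ← Real.rpow_natCast t 2]
      norm_num
    -- from hX and hineq : t^{4/3} ≤ C t²
    have hmain : t ^ ((4:ℝ)/3) ≤ C * (t ^ ((4:ℝ)/3) * t ^ ((2:ℝ)/3)) := by
      rw [← e]
      nlinarith [hX, hineq, hf1t]
    have := le_of_mul_le_mul_left (by linarith [hmain] : t ^ ((4:ℝ)/3) * 1 ≤ t ^ ((4:ℝ)/3) * (C * t ^ ((2:ℝ)/3))) h43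
    linarith
  have htend : Filter.Tendsto (fun t : ℝ => C * t ^ ((2:ℝ)/3)) (𝓝[>] (0:ℝ))
      (𝓝 (C * (0:ℝ) ^ ((2:ℝ)/3))) :=
    (((Real.continuousAt_rpow_const 0 ((2:ℝ)/3) (Or.inr (by norm_num))).tendsto).const_mul C).mono_left
      nhdsWithin_le_nhds
  have hfin : (1:ℝ) ≤ C * (0:ℝ) ^ ((2:ℝ)/3) := ge_of_tendsto htend hev1
  rw [Real.zero_rpow (by norm_num : ((2:ℝ)/3) ≠ 0)] at hfin
  norm_num at hfin

end Statement6Aux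

open Filter Topology

/-- The function `w(x₁,x₂) = -|x₁|^{4/3}` is a viscosity solution of
`-Δ_∞ w = 4³/3⁴ = 64/81` in `ℝ²`. -/
theorem statement6 :
    IsViscositySol Set.univ (fun _ => 64 / 81)
      (fun x : E2 => -(|x 0| ^ ((4 : ℝ) / 3))) := by
  intro φ hφ
  constructor
  · rintro x₀ - hmax
    have hmax' : ∀ᶠ y in 𝓝 x₀,
        -(|y 0| ^ ((4:ℝ)/3)) - φ y ≤ -(|x₀ 0| ^ ((4:ℝ)/3)) - φ x₀ := by
      have := hmax
      simp only [IsLocalMaxOn, IsMaxFilter, nhdsWithin_univ] at this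
      exact this
    have hm : ∀ᶠ y in 𝓝 x₀, Statement6Aux.f1 (y 0) - φ y ≤
        Statement6Aux.f1 (x₀ 0) - φ x₀ := by
      filter_upwards [hmax'] with y hy
      rw [Statement6Aux.f1_eq_abs, Statement6Aux.f1_eq_abs]
      exact hy
    have hp1 : pd 1 φ x₀ = 0 := Statement6Aux.pd1_zero_max hφ x₀ hm
    have hexp : infLap φ x₀ = pd 0 φ x₀ * pd 0 φ x₀ * pd2 0 0 φ x₀ := by
      simp [infLap, Fin.sum_univ_two, hp1]
    by_cases ht : x₀ 0 = 0
    · have hp0 := Statement6Aux.max_zero hφ x₀ ht hm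
      show -infLap φ x₀ ≤ 64 / 81
      rw [hexp, hp0]
      norm_num
    · obtain ⟨hp0, hq⟩ := Statement6Aux.max_ne hφ x₀ ht hm
      have hsq := Statement6Aux.D1_sq_mul_D2 ht
      have hmul : (Statement6Aux.D1 (x₀ 0)) ^ 2 * Statement6Aux.D2 (x₀ 0) ≤
          (Statement6Aux.D1 (x₀ 0)) ^ 2 * pd2 0 0 φ x₀ :=
        mul_le_mul_of_nonneg_left hq (sq_nonneg _)
      show -infLap φ x₀ ≤ 64 / 81
      rw [hexp, hp0]
      nlinarith [hmul, hsq]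
  · rintro x₀ - hmin
    have hmin' : ∀ᶠ y in 𝓝 x₀,
        -(|x₀ 0| ^ ((4:ℝ)/3)) - φ x₀ ≤ -(|y 0| ^ ((4:ℝ)/3)) - φ y := by
      have := hmin
      simp only [IsLocalMinOn, IsMinFilter, nhdsWithin_univ] at this
      exact this
    have hm : ∀ᶠ y in 𝓝 x₀, Statement6Aux.f1 (x₀ 0) - φ x₀ ≤
        Statement6Aux.f1 (y 0) - φ y := by
      filter_upwards [hmin'] with y hy
      rw [Statement6Aux.f1_eq_abs, Statement6Aux.f1_eq_abs]
      exact hy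
    by_cases ht : x₀ 0 = 0
    · exact absurd (Statement6Aux.min_zero hφ x₀ ht hm) (by simp)
    · have hp1 : pd 1 φ x₀ = 0 := Statement6Aux.pd1_zero_min hφ x₀ hm
      have hexp : infLap φ x₀ = pd 0 φ x₀ * pd 0 φ x₀ * pd2 0 0 φ x₀ := by
        simp [infLap, Fin.sum_univ_two, hp1]
      obtain ⟨hp0, hq⟩ := Statement6Aux.min_ne hφ x₀ ht hm
      have hsq := Statement6Aux.D1_sq_mul_D2 ht
      have hmul : (Statement6Aux.D1 (x₀ 0)) ^ 2 * pd2 0 0 φ x₀ ≤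
          (Statement6Aux.D1 (x₀ 0)) ^ 2 * Statement6Aux.D2 (x₀ 0) :=
        mul_le_mul_of_nonneg_left hq (sq_nonneg _)
      show (64:ℝ) / 81 ≤ -infLap φ x₀
      rw [hexp, hp0]
      nlinarith [hmul, hsq]
end
end

section
/- There is an absolute constant C with the following property. Let Ω ⊆ ℝ² be open, f ∈ C⁰(Ω), and let u ∈ C⁰(Ω) be a viscosity solution of -Δ_∞ u = f in Ω. Then for every ball B(x,R) with B(x,2R) ⋐ Ω, u is Lipschitz on B(x,R) with |u(y) - u(z)| ≤ [ C R^{-1} sup_{closure of B(x,2R)} |u| + C ( R · sup_{closure of B(x,2R)} |f| )^{1/3} ] · |y - z| for all y, z ∈ B(x,R). -/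
open MeasureTheory Metric
open scoped ENNReal RealInnerProductSpace BigOperators

noncomputable section

def qf (z w : E2) : ℝ := ∑ i, (w i - z i)^2

def qD (z w : E2) : E2 →L[ℝ] ℝ :=
  ∑ i, (2*(w i - z i)) • (EuclideanSpace.proj (𝕜 := ℝ) i)

lemma hasFDerivAt_qf (z w : E2) : HasFDerivAt (qf z) (qD z w) w := by
  have h : ∀ i : Fin 2, HasFDerivAt (fun v : E2 => (v i - z i)^2)
      ((2*(w i - z i)) • (EuclideanSpace.proj (𝕜 := ℝ) i)) w := by
    intro i
    have h0 : HasFDerivAt (fun v : E2 => v i - z i) (EuclideanSpace.proj (𝕜 := ℝ) i : E2 →L[ℝ] ℝ) w :=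
      ((EuclideanSpace.proj (𝕜 := ℝ) i).hasFDerivAt (x := w)).sub_const (z i)
    have := h0.fun_mul h0
    have e : (fun v : E2 => (v i - z i)^2) = fun v => (v i - z i) * (v i - z i) := by
      funext v; simp [sq]
    rw [e]
    refine this.congr_fderiv ?_
    · ext v; simp [ContinuousLinearMap.smul_apply]; ring
  exact HasFDerivAt.fun_sum (fun i _ => h i)

lemma proj_single (i j : Fin 2) :
    (EuclideanSpace.proj (𝕜 := ℝ) j : E2 →L[ℝ] ℝ) (EuclideanSpace.single i 1)
      = if j = i then 1 else 0 := by
  simp [EuclideanSpace.single_apply]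

lemma qD_apply (z w : E2) (i : Fin 2) :
    qD z w (EuclideanSpace.single i 1) = 2*(w i - z i) := by
  simp only [qD, ContinuousLinearMap.sum_apply, ContinuousLinearMap.smul_apply,
    Fin.sum_univ_two, smul_eq_mul, proj_single]
  fin_cases i <;> norm_num <;> rfl

lemma norm_sq_eq_qf (z w : E2) : ‖w - z‖^2 = qf z w := by
  rw [EuclideanSpace.norm_eq, Real.sq_sqrt (by positivity)]
  simp [qf, sub_sq]

section phi
variable (z : E2) (A B c s₀ : ℝ)

def phi (w : E2) : ℝ := A + (B*(qf z w - s₀) + c*((qf z w - s₀)*(qf z w - s₀)))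

lemma phi_eq (w : E2) : phi z A B c s₀ w = A + B*(qf z w - s₀) + c*(qf z w - s₀)^2 := by
  rw [phi]; ring

lemma contDiff_qf (z : E2) : ContDiff ℝ 2 (qf z) := by
  apply ContDiff.sum (fun i _ => ?_)
  exact (((EuclideanSpace.proj (𝕜 := ℝ) i).contDiff).sub contDiff_const).pow 2

lemma contDiff_phi : ContDiff ℝ 2 (phi z A B c s₀) := by
  have h := (contDiff_qf z).sub (contDiff_const (c := s₀))
  exact contDiff_const.add ((contDiff_const.mul h).add (contDiff_const.mul (h.mul h)))

lemma hasFDerivAt_phi (w : E2) :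
    HasFDerivAt (phi z A B c s₀) ((B + 2*c*(qf z w - s₀)) • qD z w) w := by
  have h1 : HasFDerivAt (fun v => qf z v - s₀) (qD z w) w := (hasFDerivAt_qf z w).sub_const s₀
  have h2 := (h1.fun_mul h1).const_mul c
  have h3 := h1.const_mul B
  have := (h3.add h2).const_add A
  refine HasFDerivAt.congr_fderiv (f := phi z A B c s₀) this ?_
  ext v
  simp [ContinuousLinearMap.add_apply, ContinuousLinearMap.smul_apply]
  ring

lemma pd_phi (i : Fin 2) :
    pd i (phi z A B c s₀) = fun w => (B + 2*c*(qf z w - s₀)) * (2*(w i - z i)) := by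
  funext w
  rw [pd, (hasFDerivAt_phi z A B c s₀ w).fderiv]
  simp [qD_apply]

lemma pd2_phi (i j : Fin 2) (w : E2) :
    pd2 i j (phi z A B c s₀) w =
      (B + 2*c*(qf z w - s₀)) * (2*(if j = i then 1 else 0))
        + (2*(w j - z j)) * (2*c*(2*(w i - z i))) := by
  rw [pd2, pd_phi]
  have h1 : HasFDerivAt (fun v => qf z v - s₀) (qD z w) w := (hasFDerivAt_qf z w).sub_const s₀
  have hg : HasFDerivAt (fun v : E2 => B + 2*c*(qf z v - s₀)) ((2*c) • qD z w) w :=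
    (h1.const_mul (2*c)).const_add B
  have hl : HasFDerivAt (fun v : E2 => 2*(v j - z j)) ((2:ℝ) • (EuclideanSpace.proj (𝕜 := ℝ) j)) w := by
    exact (((EuclideanSpace.proj (𝕜 := ℝ) j).hasFDerivAt (x := w)).sub_const (z j)).const_mul (2:ℝ)
  have := hg.fun_mul hl
  rw [pd, this.fderiv]
  simp only [ContinuousLinearMap.add_apply, ContinuousLinearMap.smul_apply, qD_apply,
    proj_single, smul_eq_mul]

lemma infLap_phi (w : E2) (hw : qf z w = s₀) :
    infLap (phi z A B c s₀) w = 32*c*B^2*s₀^2 + 8*B^3*s₀ := by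
  have hs : (w 0 - z 0)^2 + (w 1 - z 1)^2 = s₀ := by
    rw [← hw, qf, Fin.sum_univ_two]
  rw [infLap]
  simp only [Fin.sum_univ_two, pd2_phi, pd_phi, hw, sub_self, mul_zero, add_zero, zero_add,
    mul_one]
  norm_num
  rw [← hs]
  ring
end phi

lemma core (Ω : Set E2) (f u : E2 → ℝ) (hu : ContinuousOn u Ω)
    (hv : IsViscositySol Ω f u) (z : E2) (ρ L k F : ℝ) (hρ : 0 < ρ)
    (hsub : closedBall z ρ ⊆ Ω) (hk : 0 < k) (hsl : 0 < L - 2*k*ρ)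
    (hF : ∀ w ∈ closedBall z ρ, f w ≤ F)
    (hcurv : F < 2*k*(L - 2*k*ρ)^2)
    (hbd : ∀ w ∈ closedBall z ρ, ‖w - z‖ = ρ → u w - u z ≤ L*ρ - k*ρ^2) :
    ∀ w ∈ closedBall z ρ, u w - u z ≤ L*‖w-z‖ - k*‖w-z‖^2 := by
  set Ψ : E2 → ℝ := fun w => u w - u z - (L*‖w-z‖ - k*‖w-z‖^2) with hΨ
  have hcontΨ : ContinuousOn Ψ (closedBall z ρ) := by
    apply ContinuousOn.sub
    · exact (hu.mono hsub).sub continuousOn_const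
    · refine Continuous.continuousOn ?_
      exact (continuous_const.mul ((continuous_id.sub continuous_const).norm)).sub
        (continuous_const.mul (((continuous_id.sub continuous_const).norm).pow 2))
  obtain ⟨y₀, hy₀mem, hmax⟩ := (isCompact_closedBall z ρ).exists_isMaxOn
    ⟨z, mem_closedBall_self hρ.le⟩ hcontΨ
  suffices h : Ψ y₀ ≤ 0 by
    intro w hw
    have h2 := hmax hw
    simp only [hΨ, Set.mem_setOf_eq] at h2 h
    linarith
  by_contra hpos
  push_neg at hpos
  have hΨz : Ψ z = 0 := by simp [Ψ]
  have hy₀ne : y₀ ≠ z := by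
    intro h; rw [h, hΨz] at hpos; exact absurd hpos (lt_irrefl 0)
  set r₀ : ℝ := ‖y₀ - z‖ with hr₀def
  have hr₀pos : 0 < r₀ := by
    rw [hr₀def]; exact norm_pos_iff.mpr (sub_ne_zero.mpr hy₀ne)
  have hr₀le : r₀ ≤ ρ := by
    have := mem_closedBall.mp hy₀mem; rwa [dist_eq_norm] at this
  have hr₀lt : r₀ < ρ := by
    rcases lt_or_eq_of_le hr₀le with h | h
    · exact h
    · exfalso
      have := hbd y₀ hy₀mem h
      have h2 : Ψ y₀ = u y₀ - u z - (L*ρ - k*ρ^2) := by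
        simp only [Ψ, hr₀def] at *; rw [h]
      rw [h2] at hpos; linarith
  set g' : ℝ := L - 2*k*r₀ with hg'def
  have hg'pos : 0 < g' := by
    have : L - 2*k*r₀ > L - 2*k*ρ := by nlinarith
    linarith
  have hnum : 0 < 2*k*g'^2 - F := by
    have h1 : L - 2*k*ρ < g' := by rw [hg'def]; nlinarith
    have hgg : (L-2*k*ρ)^2 < g'^2 := by nlinarith
    nlinarith
  set η : ℝ := (2*k*g'^2 - F)/(8*g'^2*r₀^2 + 1) with hηdef
  have hη : 0 < η := div_pos hnum (by positivity)
  have hηeq : η * (8*g'^2*r₀^2 + 1) = 2*k*g'^2 - F := by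
    rw [hηdef]; field_simp
  set s₀ : ℝ := r₀^2 with hs₀def
  set B : ℝ := g'/(2*r₀) with hBdef
  set c : ℝ := -L/(8*r₀^3) + η with hcdef
  set A : ℝ := u z + (L*r₀ - k*r₀^2) with hAdef
  set φ : E2 → ℝ := phi z A B c s₀ with hφdef
  have hqy₀ : qf z y₀ = s₀ := by rw [← norm_sq_eq_qf, ← hr₀def, hs₀def]
  have hφy₀ : φ y₀ = u z + (L*r₀ - k*r₀^2) := by
    rw [hφdef, phi_eq, hqy₀]; simp [hAdef]
  -- key polynomial identity
  have hkey : ∀ r : ℝ, (A + B*(r^2 - s₀) + c*(r^2 - s₀)^2) - (u z + (L*r - k*r^2))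
      = (r - r₀)^2 * (c*(r + r₀)^2 + B + k) := by
    intro r
    rw [hAdef, hBdef, hs₀def]
    field_simp
    ring
  set Q : ℝ → ℝ := fun r => c*(r + r₀)^2 + B + k with hQdef
  have hQr₀ : Q r₀ = 4*η*r₀^2 := by
    rw [hQdef]; simp only []
    rw [hcdef, hBdef]
    field_simp
    ring
  have hQcont : Continuous Q := by
    rw [hQdef]
    fun_prop
  have hQpos : ∀ᶠ r in nhds r₀, 0 < Q r := by
    have h0 : 0 < Q r₀ := by rw [hQr₀]; positivity
    have ht : Filter.Tendsto Q (nhds r₀) (nhds (Q r₀)) := hQcont.continuousAt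
    exact ht (Ioi_mem_nhds h0)
  obtain ⟨δ, hδpos, hδ⟩ : ∃ δ > 0, ∀ r : ℝ, |r - r₀| < δ → 0 < Q r := by
    rcases Metric.eventually_nhds_iff.mp hQpos with ⟨δ, hδpos, hd⟩
    exact ⟨δ, hδpos, fun r hr => hd (by rwa [Real.dist_eq])⟩
  set V : Set E2 := ball z ρ ∩ {w : E2 | |‖w - z‖ - r₀| < δ} with hVdef
  have hVopen : IsOpen V := by
    apply isOpen_ball.inter
    have : Continuous fun w : E2 => |‖w - z‖ - r₀| := by fun_prop
    exact isOpen_lt this continuous_const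
  have hy₀V : y₀ ∈ V := by
    constructor
    · rw [mem_ball, dist_eq_norm]
      exact lt_of_le_of_lt (le_of_eq hr₀def.symm) hr₀lt
    · simp only [Set.mem_setOf_eq, ← hr₀def, sub_self, abs_zero]
      exact hδpos
  have hdom : ∀ w ∈ V, u w - φ w ≤ u y₀ - φ y₀ := by
    rintro w ⟨hw1, hw2⟩
    have hq : qf z w = ‖w - z‖^2 := (norm_sq_eq_qf z w).symm
    have hφw : φ w = A + B*(‖w - z‖^2 - s₀) + c*(‖w - z‖^2 - s₀)^2 := by
      rw [hφdef, phi_eq, hq]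
    have hid := hkey ‖w - z‖
    have hQr : 0 < Q ‖w - z‖ := hδ _ hw2
    simp only [hQdef] at hQr
    have hrhs : 0 ≤ (‖w - z‖ - r₀)^2 * (c*(‖w - z‖ + r₀)^2 + B + k) :=
      mul_nonneg (sq_nonneg _) hQr.le
    have hφge : u z + (L*‖w - z‖ - k*‖w - z‖^2) ≤ φ w := by
      rw [hφw]
      linarith [hid, hrhs]
    have hΨw := hmax (ball_subset_closedBall hw1)
    simp only [hΨ, Set.mem_setOf_eq] at hΨw
    rw [hφy₀]
    rw [← hr₀def] at hΨw
    linarith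
  have hloc : IsLocalMaxOn (fun y => u y - φ y) Ω y₀ := by
    have hVnhds : V ∈ nhdsWithin y₀ Ω := mem_nhdsWithin_of_mem_nhds (hVopen.mem_nhds hy₀V)
    exact Filter.eventually_of_mem hVnhds hdom
  have happ := (hv φ (contDiff_phi z A B c s₀)).1 y₀ (hsub hy₀mem) hloc
  have hval : infLap φ y₀ = 32*c*B^2*s₀^2 + 8*B^3*s₀ := infLap_phi z A B c s₀ y₀ hqy₀
  have heq2 : 32*c*B^2*s₀^2 + 8*B^3*s₀ = -(2*k*g'^2) + 8*η*g'^2*r₀^2 := by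
    rw [hcdef, hBdef, hs₀def, hg'def]
    field_simp
    ring
  have hηeq' : 8*η*g'^2*r₀^2 + η = 2*k*g'^2 - F := by
    rw [hs₀def] at hηeq
    linear_combination hηeq
  have hlt : F < -(32*c*B^2*s₀^2 + 8*B^3*s₀) := by
    rw [heq2]
    linarith [hηeq', hη]
  rw [hval] at happ
  have hfle := hF y₀ hy₀mem
  linarith

lemma supAbsOn_le (h : E2 → ℝ) (s : Set E2) (hs : IsCompact s) (hc : ContinuousOn h s) :
    ∀ w ∈ s, |h w| ≤ supAbsOn h s := by
  intro w hw
  have hbdd : BddAbove ((fun y => |h y|) '' s) :=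
    (hs.image_of_continuousOn hc.abs).bddAbove
  exact le_csSup hbdd ⟨w, hw, rfl⟩

/-- Interior Lipschitz estimate for viscosity solutions of
`-Δ_∞ u = f`: there is an absolute constant `C` such that for every ball
`B(x,R)` with `B(x,2R) ⋐ Ω`, `u` is Lipschitz on `B(x,R)` with constant
`C R⁻¹ sup_{cl B(x,2R)} |u| + C (R sup_{cl B(x,2R)} |f|)^{1/3}`. -/
theorem statement10 :
    ∃ C : ℝ, 0 < C ∧
      ∀ (Ω : Set E2), IsOpen Ω →
      ∀ f u : E2 → ℝ, ContinuousOn f Ω → ContinuousOn u Ω → IsViscositySol Ω f u →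
      ∀ (x : E2) (R : ℝ), 0 < R → closedBall x (2 * R) ⊆ Ω →
      ∀ y ∈ ball x R, ∀ z ∈ ball x R,
        |u y - u z| ≤
          (C / R * supAbsOn u (closedBall x (2 * R))
            + C * (R * supAbsOn f (closedBall x (2 * R))) ^ ((1 : ℝ) / 3)) * ‖y - z‖ := by
  refine ⟨3, by norm_num, ?_⟩
  intro Ω hΩ f u hf hu hv x R hR hsub y hy z hz
  set cb : Set E2 := closedBall x (2*R) with hcb
  set M : ℝ := supAbsOn u cb with hM
  set F : ℝ := supAbsOn f cb with hF
  have hMle : ∀ w ∈ cb, |u w| ≤ M :=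
    supAbsOn_le u cb (isCompact_closedBall _ _) (hu.mono hsub)
  have hFle : ∀ w ∈ cb, |f w| ≤ F :=
    supAbsOn_le f cb (isCompact_closedBall _ _) (hf.mono hsub)
  have hxcb : x ∈ cb := mem_closedBall_self (by linarith)
  have hM0 : 0 ≤ M := le_trans (abs_nonneg _) (hMle x hxcb)
  have hF0 : 0 ≤ F := le_trans (abs_nonneg _) (hFle x hxcb)
  have hRF0 : 0 ≤ R*F := by positivity
  have hX0 : 0 ≤ (R*F) ^ ((1:ℝ)/3) := Real.rpow_nonneg hRF0 _
  have hcube : ((R*F) ^ ((1:ℝ)/3))^3 = R*F := by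
    rw [← Real.rpow_natCast ((R*F) ^ ((1:ℝ)/3)) 3, ← Real.rpow_mul hRF0]
    norm_num
  -- key one-sided estimate for nearby points
  have key : ∀ ε : ℝ, 0 < ε → ∀ a ∈ ball x R, ∀ b ∈ ball x R, ‖a - b‖ < R →
      u a - u b ≤ (3*M/R + 3*(R*F) ^ ((1:ℝ)/3) + ε) * ‖a - b‖ := by
    intro ε hε a ha b hb hab
    set L : ℝ := 3*M/R + 3*(R*F) ^ ((1:ℝ)/3) + ε with hL
    have hL0 : 0 < L := by
      have : 0 ≤ 3*M/R := by positivity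
      have : 0 ≤ 3*(R*F) ^ ((1:ℝ)/3) := by positivity
      rw [hL]; linarith
    set k : ℝ := L/(12*R) with hk
    have hk0 : 0 < k := by rw [hk]; positivity
    have hsl : 0 < L - 2*k*R := by
      have : L - 2*k*R = 5*L/6 := by rw [hk]; field_simp; ring
      rw [this]; positivity
    have hbsub : closedBall b R ⊆ Ω := by
      intro w hw
      apply hsub
      rw [mem_closedBall]
      calc dist w x ≤ dist w b + dist b x := dist_triangle _ _ _
        _ ≤ R + R := add_le_add (mem_closedBall.mp hw) (mem_ball.mp hb).le
        _ = 2*R := by ring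
    have hbsub2 : closedBall b R ⊆ cb := by
      intro w hw
      rw [hcb, mem_closedBall]
      calc dist w x ≤ dist w b + dist b x := dist_triangle _ _ _
        _ ≤ R + R := add_le_add (mem_closedBall.mp hw) (mem_ball.mp hb).le
        _ = 2*R := by ring
    have hcube27 : 27*(R*F) < L^3 := by
      have h1 : 3*(R*F) ^ ((1:ℝ)/3) < L := by
        have : 0 ≤ 3*M/R := by positivity
        rw [hL]; linarith
      have h2 : (3*(R*F) ^ ((1:ℝ)/3))^3 < L^3 := by
        apply pow_lt_pow_left₀ h1 (by positivity)
        norm_num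
      calc 27*(R*F) = (3*(R*F) ^ ((1:ℝ)/3))^3 := by rw [mul_pow, hcube]; norm_num
        _ < L^3 := h2
    have hcurv : F < 2*k*(L - 2*k*R)^2 := by
      have heq : 2*k*(L - 2*k*R)^2 = 25*L^3/(216*R) := by
        rw [hk]; field_simp; ring
      rw [heq, lt_div_iff₀ (by positivity)]
      nlinarith [pow_pos hL0 3, hF0, hR]
    have hbd : ∀ w ∈ closedBall b R, ‖w - b‖ = R → u w - u b ≤ L*R - k*R^2 := by
      intro w hw _
      have h1 : |u w| ≤ M := hMle w (hbsub2 hw)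
      have h2 : |u b| ≤ M := hMle b (hbsub2 (mem_closedBall_self hR.le))
      have h3 : 3*M ≤ L*R := by
        have : 3*M/R ≤ L := by rw [hL]; linarith [hX0, hε]
        rw [div_le_iff₀ hR] at this
        linarith
      have h4 : L*R - k*R^2 = 11*(L*R)/12 := by rw [hk]; field_simp; ring
      rw [h4]
      obtain ⟨h1a, h1b⟩ := abs_le.mp h1
      obtain ⟨h2a, h2b⟩ := abs_le.mp h2
      have hLR0 : 0 ≤ L*R := by positivity
      clear_value L M
      linarith only [h1b, h2a, h3, hLR0, hM0]
    have hcore := core Ω f u hu hv b R L k F hR hbsub hk0 hsl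
      (fun w hw => le_of_abs_le (hFle w (hbsub2 hw))) hcurv hbd
    have hamem : a ∈ closedBall b R := by
      rw [mem_closedBall, dist_eq_norm]; exact hab.le
    have := hcore a hamem
    have hknn : 0 ≤ k*‖a - b‖^2 := by positivity
    linarith
  -- two-sided estimate for arbitrary points via the midpoint
  have key2 : ∀ ε : ℝ, 0 < ε → ∀ a ∈ ball x R, ∀ b ∈ ball x R,
      u a - u b ≤ (3*M/R + 3*(R*F) ^ ((1:ℝ)/3) + ε) * ‖a - b‖ := by
    intro ε hε a ha b hb
    set m : E2 := midpoint ℝ a b with hm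
    have hmmem : m ∈ ball x R := by
      rw [mem_ball]
      calc dist m x = dist (midpoint ℝ a b) (midpoint ℝ x x) := by rw [midpoint_self]
        _ ≤ (dist a x + dist b x)/2 := dist_midpoint_midpoint_le _ _ _ _
        _ < (R + R)/2 := by
            have := add_lt_add (mem_ball.mp ha) (mem_ball.mp hb)
            linarith
        _ = R := by ring
    have ham : a - m = (2:ℝ)⁻¹ • (a - b) := by
      rw [hm, midpoint_eq_smul_add, invOf_eq_inv]
      module
    have hmb : m - b = (2:ℝ)⁻¹ • (a - b) := by
      rw [hm, midpoint_eq_smul_add, invOf_eq_inv]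
      module
    have hnam : ‖a - m‖ = ‖a - b‖/2 := by
      rw [ham, norm_smul]; simp; ring
    have hnmb : ‖m - b‖ = ‖a - b‖/2 := by
      rw [hmb, norm_smul]; simp; ring
    have habR : ‖a - b‖ < 2*R := by
      calc ‖a - b‖ ≤ dist a x + dist x b := by rw [← dist_eq_norm]; exact dist_triangle _ _ _
        _ < R + R := add_lt_add (mem_ball.mp ha) (by rw [dist_comm]; exact mem_ball.mp hb)
        _ = 2*R := by ring
    have h1 := key ε hε a ha m hmmem (by rw [hnam]; linarith)
    have h2 := key ε hε m hmmem b hb (by rw [hnmb]; linarith)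
    rw [hnam] at h1
    rw [hnmb] at h2
    linarith
  -- remove ε
  have final : ∀ a ∈ ball x R, ∀ b ∈ ball x R,
      u a - u b ≤ (3*M/R + 3*(R*F) ^ ((1:ℝ)/3)) * ‖a - b‖ := by
    intro a ha b hb
    by_contra hcon
    push_neg at hcon
    set L₀ : ℝ := 3*M/R + 3*(R*F) ^ ((1:ℝ)/3) with hL₀
    set d : ℝ := u a - u b - L₀*‖a - b‖ with hd
    have hd0 : 0 < d := by rw [hd]; linarith
    set ε : ℝ := d/(‖a - b‖ + 1) with hε
    have hε0 : 0 < ε := by rw [hε]; positivity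
    have hkey := key2 ε hε0 a ha b hb
    have hlt : ε * ‖a - b‖ < d := by
      rw [hε, div_mul_eq_mul_div, div_lt_iff₀ (by positivity)]
      nlinarith [norm_nonneg (a - b), hd0]
    nlinarith [hkey, hlt]
  have h1 := final y hy z hz
  have h2 := final z hz y hy
  rw [norm_sub_rev z y] at h2
  have hgoal : (3 / R * M + 3 * (R * F) ^ ((1:ℝ)/3)) = 3*M/R + 3*(R*F) ^ ((1:ℝ)/3) := by
    ring
  rw [hgoal]
  exact abs_sub_le_iff.mpr ⟨h1, h2⟩
end
end
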